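/- Σ_{m=0}^∞ (1/((m+1)(m+2))) · ₀F₁(; m+3; 1) = I₀(2) - 1, where I₀ is the modified Bessel function of the first kind of order 0; and Σ_{m=0}^∞ (1/((m+1)(m+2))) · ₁F₁(1; m+3; 1) = Ei(1) - γ, where Ei is the exponential integral and γ the Euler–Mascheroni constant. -/

import Mathlib

open scoped BigOperators

/-- Pochhammer symbol `(a)_k = Γ(a+k)/Γ(a)`. -/
noncomputable def poch (a : ℝ) (k : ℕ) : ℝ := Real.Gamma (a + k) / Real.Gamma a

/-- Modified Bessel function of the first kind of order 0:
`I₀(x) = Σ_{k=0}^∞ (x/2)^{2k}/(k!)²`. -/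
noncomputable def besselI0 (x : ℝ) : ℝ :=
  ∑' k : ℕ, (x / 2) ^ (2 * k) / (Nat.factorial k : ℝ) ^ 2

/-- The exponential integral at 1: `Ei(1) = γ + Σ_{k=1}^∞ 1/(k·k!)`. -/
noncomputable def Ei1 : ℝ :=
  Real.eulerMascheroniConstant +
    ∑' k : ℕ, 1 / (((k : ℝ) + 1) * (Nat.factorial (k + 1) : ℝ))

/-!
Since `(m+1)(m+2)·(m+3)_k = (m+k+2)!/m!`, both double series have the nonnegative terms
`c_k/k! · m!/(m+k+2)!` (with `c_k = 1`, resp. `c_k = (1)_k = k!`), so the order of summation may be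
exchanged. The inner sum over `m` telescopes: `a_m = m!/((k+1)(m+k+1)!)` satisfies
`a_m - a_{m+1} = m!/(m+k+2)!` and `a_m → 0`, so it equals `1/((k+1)(k+1)!)`. What is left is
`∑ 1/((k+1)!)² = I₀(2) - 1`, resp. `∑ 1/((k+1)(k+1)!) = Ei(1) - γ`.
-/

open Filter Topology Nat

theorem hasSum_sub_succ_of_antitone {f : ℕ → ℝ} {l : ℝ} (hf : Antitone f)
    (hl : Tendsto f atTop (𝓝 l)) : HasSum (fun n ↦ f n - f (n + 1)) (f 0 - l) := by
  refine (hasSum_iff_tendsto_nat_of_nonneg (fun n ↦ sub_nonneg.2 (hf n.le_succ)) _).2 ?_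
  simpa only [Finset.sum_range_sub'] using tendsto_const_nhds.sub hl

theorem tsum_comm_of_hasSum_of_nonneg {β γ : Type*} {f : β → γ → ℝ} {g : β → ℝ}
    (hf₀ : ∀ b c, 0 ≤ f b c) (hf : ∀ b, HasSum (f b) (g b)) (hg : Summable g) :
    ∑' c, ∑' b, f b c = ∑' b, g b := by
  have hunc : Summable (Function.uncurry f) :=
    (summable_prod_of_nonneg fun p ↦ hf₀ p.1 p.2).2
      ⟨fun b ↦ (hf b).summable, by simpa only [(hf _).tsum_eq] using hg⟩
  rw [hunc.tsum_comm]
  exact tsum_congr fun b ↦ (hf b).tsum_eq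

theorem tendsto_factorial_div_factorial_add_succ (k : ℕ) :
    Tendsto (fun m : ℕ ↦ (m ! : ℝ) / (m + k + 1)!) atTop (𝓝 0) := by
  refine squeeze_zero (fun m ↦ by positivity) (fun m ↦ ?_)
    tendsto_one_div_add_atTop_nhds_zero_nat
  rw [div_le_div_iff₀ (by positivity) (by positivity), one_mul]
  calc (m ! : ℝ) * (m + 1) = (m + 1)! := by push_cast [factorial_succ]; ring
    _ ≤ (m + k + 1)! := by gcongr; omega

theorem hasSum_factorial_div_factorial_add_two (k : ℕ) :
    HasSum (fun m : ℕ ↦ (m ! : ℝ) / (m + k + 2)!) (1 / ((k + 1) * (k + 1)!)) := by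
  set a : ℕ → ℝ := fun m ↦ m ! / (m + k + 1)! / (k + 1)
  have hdiff : ∀ m : ℕ, a m - a (m + 1) = m ! / (m + k + 2)! := by
    intro m
    have h₁ : ((m + 1)! : ℝ) = (m + 1) * m ! := by push_cast [factorial_succ]; ring
    have h₂ : ((m + k + 2)! : ℝ) = (m + k + 2) * (m + k + 1)! := by
      push_cast [show m + k + 2 = m + k + 1 + 1 by omega, factorial_succ]; ring
    simp only [a, show m + 1 + k + 1 = m + k + 2 by omega, h₁, h₂]
    field_simp
    ring
  have ha : Tendsto a atTop (𝓝 0) := by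
    simpa using (tendsto_factorial_div_factorial_add_succ k).div_const ((k : ℝ) + 1)
  have hanti : Antitone a := antitone_nat_of_succ_le fun m ↦ by
    rw [← sub_nonneg, hdiff]; positivity
  convert hasSum_sub_succ_of_antitone hanti ha using 1
  · exact funext fun m ↦ (hdiff m).symm
  · simp [a, div_eq_mul_inv]

theorem poch_natCast_add_one (n k : ℕ) : poch ((n : ℝ) + 1) k = (n + k)! / n ! := by
  rw [poch, add_right_comm, ← Nat.cast_add, Real.Gamma_nat_eq_factorial,
    Real.Gamma_nat_eq_factorial]

theorem poch_one (k : ℕ) : poch 1 k = k ! := by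
  simpa using poch_natCast_add_one 0 k

theorem tsum_one_div_mul_tsum_div_poch_add_three {c : ℕ → ℝ} (hc : ∀ k, 0 ≤ c k)
    (hs : Summable fun k : ℕ ↦ c k / (k ! * ((k + 1) * (k + 1)!))) :
    ∑' m : ℕ, 1 / (((m : ℝ) + 1) * ((m : ℝ) + 2)) *
        ∑' k : ℕ, c k / (poch ((m : ℝ) + 3) k * k !) =
      ∑' k : ℕ, c k / (k ! * ((k + 1) * (k + 1)!)) := by
  have hterm : ∀ m k : ℕ,
      1 / (((m : ℝ) + 1) * ((m : ℝ) + 2)) * (c k / (poch ((m : ℝ) + 3) k * k !)) =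
        c k / k ! * (m ! / (m + k + 2)!) := by
    intro m k
    have hpoch : poch ((m : ℝ) + 3) k = (m + k + 2)! / ((m + 2) * (m + 1) * m !) := by
      rw [show (m : ℝ) + 3 = ((m + 2 : ℕ) : ℝ) + 1 by push_cast; ring, poch_natCast_add_one,
        show m + 2 + k = m + k + 2 by omega]
      push_cast [factorial_succ]
      ring
    rw [hpoch]
    field_simp
  calc _ = ∑' m : ℕ, ∑' k : ℕ, c k / k ! * (m ! / (m + k + 2)!) :=
        tsum_congr fun m ↦ by rw [← tsum_mul_left]; exact tsum_congr (hterm m)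
    _ = _ := tsum_comm_of_hasSum_of_nonneg (fun k m ↦ by have := hc k; positivity)
        (fun k ↦ by
          have := (hasSum_factorial_div_factorial_add_two k).mul_left (c k / k !)
          rwa [div_mul_div_comm (c k), mul_one] at this) hs

theorem summable_one_div_factorial : Summable fun k : ℕ ↦ 1 / (k ! : ℝ) := by
  simpa using Real.summable_pow_div_factorial 1

theorem summable_one_div_factorial_sq : Summable fun k : ℕ ↦ 1 / (k ! : ℝ) ^ 2 := by
  refine .of_nonneg_of_le (fun _ ↦ by positivity) (fun k ↦ ?_) summable_one_div_factorial
  exact one_div_le_one_div_of_le (by positivity)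
    (le_self_pow₀ (mod_cast k.factorial_pos) two_ne_zero)

theorem summable_one_div_succ_mul_factorial_succ :
    Summable fun k : ℕ ↦ 1 / (((k : ℝ) + 1) * (k + 1)!) := by
  refine .of_nonneg_of_le (fun _ ↦ by positivity) (fun k ↦ ?_) summable_one_div_factorial
  refine one_div_le_one_div_of_le (by positivity) ?_
  push_cast [factorial_succ]
  have hk := Nat.cast_nonneg (α := ℝ) k
  have hf := Nat.cast_nonneg (α := ℝ) (k !)
  nlinarith [mul_nonneg hk hf, mul_nonneg (mul_nonneg hk hk) hf]

theorem besselI0_two_sub_one : besselI0 2 - 1 = ∑' k : ℕ, 1 / ((k + 1)! : ℝ) ^ 2 := by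
  simp only [besselI0, div_self (two_ne_zero' ℝ), one_pow]
  rw [summable_one_div_factorial_sq.tsum_eq_zero_add]
  simp

/-- `Σ_{m=0}^∞ ₀F₁(;m+3;1)/((m+1)(m+2)) = I₀(2) - 1` and
`Σ_{m=0}^∞ ₁F₁(1;m+3;1)/((m+1)(m+2)) = Ei(1) - γ`. -/
theorem hypergeometric_zeta_zero_one :
    (∑' m : ℕ, (1 / (((m : ℝ) + 1) * ((m : ℝ) + 2))) *
        ∑' k : ℕ, 1 / (poch ((m : ℝ) + 3) k * (Nat.factorial k : ℝ))) =
      besselI0 2 - 1 ∧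
    (∑' m : ℕ, (1 / (((m : ℝ) + 1) * ((m : ℝ) + 2))) *
        ∑' k : ℕ, poch 1 k / (poch ((m : ℝ) + 3) k * (Nat.factorial k : ℝ))) =
      Ei1 - Real.eulerMascheroniConstant := by
  have hsq : ∀ k : ℕ, (1 : ℝ) / (k ! * ((k + 1) * (k + 1)!)) = 1 / ((k + 1)! : ℝ) ^ 2 := by
    intro k
    push_cast [factorial_succ]
    ring
  have hpoch : ∀ k : ℕ,
      poch 1 k / (k ! * ((k + 1) * (k + 1)!)) = 1 / (((k : ℝ) + 1) * (k + 1)!) :=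
    fun k ↦ by rw [poch_one, div_mul_cancel_left₀ (by positivity), one_div]
  constructor
  · rw [tsum_one_div_mul_tsum_div_poch_add_three (c := fun _ ↦ 1) (fun _ ↦ zero_le_one)
      (by simpa only [hsq] using (summable_nat_add_iff 1).2 summable_one_div_factorial_sq),
      besselI0_two_sub_one]
    exact tsum_congr hsq
  · rw [tsum_one_div_mul_tsum_div_poch_add_three (fun k ↦ (poch_one k).symm ▸ by positivity)
      (by simpa only [hpoch] using summable_one_div_succ_mul_factorial_succ),
      Ei1, add_sub_cancel_left]
    exact tsum_congr hpoch
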